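/- Let G be a simple connected graph on n ≥ 3 vertices with vertex connectivity κ(G) ≤ k for some k ≥ 1. Then SO(G) ≥ 2√2·(n−3) + 2√5, with equality if and only if G ≅ P_n, the path on n vertices. -/

import Mathlib

/-!
Give a vertex of degree `d` the weight `φ d = somborWeight d = c + c' / d` with `c = 3√2 - √5`
and `c' = 2√5 - 4√2`: the weight of this shape with `φ 1 + φ 2 = √5` and `φ 2 + φ 2 = √8`, the
two kinds of edge terms of a path. In a connected graph on at least three vertices no edge joins
two leaves, and then every edge term `√(d_u² + d_v²)` is at least `φ d_u + φ d_v`, with equality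
exactly when `d_u, d_v ≤ 2`. Summing over the edges gives `Σ_v d_v φ d_v = 2cm + c'n`, and
`m ≥ n - 1` with `c > 0` yields the bound. Equality forces `m = n - 1` and maximum degree `2`, so
some vertex is a leaf; the distance from that leaf is then a bijection onto `Fin n` realising the
path.
-/

/-- The Sombor index of a finite simple graph:
`SO(G) = Σ_{uv ∈ E(G)} √(d(u)² + d(v)²)`. -/
noncomputable def somborIndex {V : Type*} [Fintype V] (G : SimpleGraph V) : ℝ := by
  classical
  exact ∑ e ∈ G.edgeFinset,
    Sym2.lift ⟨fun u v => Real.sqrt ((G.degree u : ℝ)^2 + (G.degree v : ℝ)^2),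
      fun u v => by simp [add_comm]⟩ e

/-- The vertex connectivity of `G` is at most `k`: either `G` has at most `k+1`
vertices, or some set of at most `k` vertices disconnects `G`. -/
def vertexConnAtMost {V : Type*} [Fintype V] (G : SimpleGraph V) (k : ℕ) : Prop :=
  Fintype.card V ≤ k + 1 ∨
    ∃ S : Finset V, S.card ≤ k ∧ ¬ (G.induce ((↑S : Set V)ᶜ)).Connected

/-- The edge connectivity of `G` is at most `k`: some set of at most `k` edges
of `G` disconnects `G`. -/
def edgeConnAtMost {V : Type*} [Fintype V] (G : SimpleGraph V) (k : ℕ) : Prop :=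
  ∃ F : Set (Sym2 V), F ⊆ G.edgeSet ∧ Nat.card F ≤ k ∧ ¬ (G.deleteEdges F).Connected

open Finset

noncomputable def somborWeight (d : ℕ) : ℝ := (3 * √2 - √5) + (2 * √5 - 4 * √2) / d

lemma somborWeight_one : somborWeight 1 = √5 - √2 := by
  unfold somborWeight; push_cast; ring

lemma somborWeight_two : somborWeight 2 = √2 := by
  unfold somborWeight; push_cast; ring

lemma sqrt_two_bounds : 1.414 < √2 ∧ √2 < 1.415 :=
  ⟨(Real.lt_sqrt (by norm_num)).2 (by norm_num), (Real.sqrt_lt' (by norm_num)).2 (by norm_num)⟩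

lemma sqrt_five_bounds : 2.236 < √5 ∧ √5 < 2.237 :=
  ⟨(Real.lt_sqrt (by norm_num)).2 (by norm_num), (Real.sqrt_lt' (by norm_num)).2 (by norm_num)⟩

lemma somborWeight_lt {d : ℕ} (hd : 1 ≤ d) : somborWeight d < 3 * √2 - √5 := by
  have := sqrt_two_bounds; have := sqrt_five_bounds
  have : (2 * √5 - 4 * √2) / d < 0 := div_neg_of_neg_of_pos (by linarith) (by exact_mod_cast hd)
  unfold somborWeight; linarith

lemma somborWeight_le_sqrt_two {d : ℕ} (hd : 1 ≤ d) (hd2 : d ≤ 2) : somborWeight d ≤ √2 := by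
  have := sqrt_two_bounds; have := sqrt_five_bounds
  interval_cases d
  · rw [somborWeight_one]; linarith
  · rw [somborWeight_two]

lemma somborWeight_add_eq_sqrt {a b : ℕ} (ha : 1 ≤ a) (hb : 1 ≤ b) (ha2 : a ≤ 2) (hb2 : b ≤ 2)
    (hab : 3 ≤ a + b) : somborWeight a + somborWeight b = √((a : ℝ) ^ 2 + (b : ℝ) ^ 2) := by
  have h8 : √8 = 2 * √2 := by
    rw [show (8 : ℝ) = 2 ^ 2 * 2 by norm_num, Real.sqrt_mul' _ (by norm_num),
      Real.sqrt_sq (by norm_num)]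
  obtain ⟨rfl, rfl⟩ | ⟨rfl, rfl⟩ | ⟨rfl, rfl⟩ :
      (a = 1 ∧ b = 2) ∨ (a = 2 ∧ b = 1) ∨ (a = 2 ∧ b = 2) := by omega
  · norm_num [somborWeight_one, somborWeight_two]
  · norm_num [somborWeight_one, somborWeight_two]
  · norm_num [somborWeight_two, h8]; ring

lemma somborWeight_three_add_lt {b : ℕ} (hb : 1 ≤ b) (hb2 : b ≤ 2) :
    somborWeight 3 + somborWeight b < √((3 : ℝ) ^ 2 + (b : ℝ) ^ 2) := by
  have := sqrt_two_bounds; have := sqrt_five_bounds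
  have hb' : (1 : ℝ) ≤ b := by exact_mod_cast hb
  calc somborWeight 3 + somborWeight b ≤ somborWeight 3 + √2 := by
        gcongr; exact somborWeight_le_sqrt_two hb hb2
    _ < 3.1 := by unfold somborWeight; push_cast; linarith
    _ ≤ √10 := (Real.le_sqrt (by norm_num) (by norm_num)).2 (by norm_num)
    _ ≤ √((3 : ℝ) ^ 2 + (b : ℝ) ^ 2) := Real.sqrt_le_sqrt (by nlinarith)

lemma somborWeight_add_lt_sqrt {a b : ℕ} (ha : 1 ≤ a) (hb : 1 ≤ b) (h3 : 3 ≤ max a b) :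
    somborWeight a + somborWeight b < √((a : ℝ) ^ 2 + (b : ℝ) ^ 2) := by
  by_cases hbig : 4 ≤ max a b ∨ 3 ≤ min a b
  · have := sqrt_two_bounds; have := sqrt_five_bounds
    have h17 : (17 : ℝ) ≤ (a : ℝ) ^ 2 + (b : ℝ) ^ 2 := by
      have : 17 ≤ a ^ 2 + b ^ 2 := by
        rcases hbig with h | h
        · rcases le_max_iff.1 h with h | h <;> nlinarith
        · have := le_min_iff.1 h; nlinarith
      exact_mod_cast this
    calc somborWeight a + somborWeight b < 2 * (3 * √2 - √5) := by
          linarith [somborWeight_lt ha, somborWeight_lt hb]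
      _ ≤ 4.1 := by linarith
      _ ≤ √17 := (Real.le_sqrt (by norm_num) (by norm_num)).2 (by norm_num)
      _ ≤ _ := Real.sqrt_le_sqrt h17
  · rcases (by omega : (a = 3 ∧ b ≤ 2) ∨ (b = 3 ∧ a ≤ 2)) with ⟨rfl, hb2⟩ | ⟨rfl, ha2⟩
    · exact_mod_cast somborWeight_three_add_lt hb hb2
    · rw [add_comm, add_comm ((a : ℝ) ^ 2)]
      exact_mod_cast somborWeight_three_add_lt ha ha2

lemma somborWeight_add_le_sqrt {a b : ℕ} (ha : 1 ≤ a) (hb : 1 ≤ b) (hab : 3 ≤ a + b) :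
    somborWeight a + somborWeight b ≤ √((a : ℝ) ^ 2 + (b : ℝ) ^ 2) := by
  by_cases h2 : a ≤ 2 ∧ b ≤ 2
  · exact (somborWeight_add_eq_sqrt ha hb h2.1 h2.2 hab).le
  · exact (somborWeight_add_lt_sqrt ha hb (by omega)).le

lemma somborWeight_add_eq_sqrt_iff {a b : ℕ} (ha : 1 ≤ a) (hb : 1 ≤ b) (hab : 3 ≤ a + b) :
    somborWeight a + somborWeight b = √((a : ℝ) ^ 2 + (b : ℝ) ^ 2) ↔ a ≤ 2 ∧ b ≤ 2 := by
  refine ⟨fun h => ?_, fun h2 => somborWeight_add_eq_sqrt ha hb h2.1 h2.2 hab⟩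
  by_contra h2
  exact (somborWeight_add_lt_sqrt ha hb (by omega)).ne h

namespace SimpleGraph

section

variable {V : Type*} {G : SimpleGraph V}

lemma Connected.exists_adj_dist_eq (hG : G.Connected) (u : V) {x : V} {k : ℕ}
    (hx : G.dist u x = k + 1) : ∃ y, G.Adj y x ∧ G.dist u y = k := by
  obtain ⟨p, hp⟩ := hG.exists_walk_length_eq_dist x u
  rw [dist_comm, hx] at hp
  cases p with
  | nil => simp at hp
  | cons hxy q =>
    refine ⟨_, hxy.symm, le_antisymm ?_ ?_⟩
    · rw [Walk.length_cons] at hp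
      rw [dist_comm]
      exact (G.dist_le q).trans_eq (by omega)
    · rcases hxy.symm.diff_dist_adj (u := u) with h | h | h <;> omega

end

lemma pathGraph_degree_le_two {n : ℕ} (i : Fin n) [Fintype ((pathGraph n).neighborSet i)] :
    (pathGraph n).degree i ≤ 2 := by
  rw [← card_neighborSet_eq_degree, ← Fintype.card_bool]
  refine Fintype.card_le_of_injective (fun j => decide (j.1.val + 1 = i.val)) ?_
  rintro ⟨j, hj⟩ ⟨j', hj'⟩ h
  rw [mem_neighborSet, pathGraph_adj] at hj hj'
  simp only [decide_eq_decide] at h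
  exact Subtype.ext <| Fin.ext <| show j.val = j'.val by omega

lemma pathGraph_degree_zero_le_one {n : ℕ} [Fintype ((pathGraph (n + 1)).neighborSet 0)] :
    (pathGraph (n + 1)).degree 0 ≤ 1 := by
  rw [← card_neighborSet_eq_degree, Fintype.card_le_one_iff]
  rintro ⟨j, hj⟩ ⟨j', hj'⟩
  rw [mem_neighborSet, pathGraph_adj] at hj hj'
  simp only [Fin.val_zero] at hj hj'
  exact Subtype.ext <| Fin.ext <| show j.val = j'.val by omega

variable {V : Type*} [Fintype V] {G : SimpleGraph V} [DecidableRel G.Adj]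

lemma Connected.degree_pos_of_one_lt_card (hG : G.Connected) (hV : 1 < Fintype.card V) (v : V) :
    0 < G.degree v :=
  have : Nontrivial V := Fintype.one_lt_card_iff_nontrivial.1 hV
  hG.preconnected.degree_pos_of_nontrivial v

lemma Connected.card_le_card_edgeFinset_add_one (hG : G.Connected) :
    Fintype.card V ≤ #G.edgeFinset + 1 := by
  simpa [Nat.card_eq_fintype_card, edgeFinset_card] using hG.card_vert_le_card_edgeSet_add_one

lemma sum_edgeFinset_lift_add [DecidableEq V] {M : Type*} [AddCommMonoid M] (f : V → M) :
    ∑ e ∈ G.edgeFinset, Sym2.lift ⟨fun u v => f u + f v, fun _ _ => add_comm _ _⟩ e =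
      ∑ v, G.degree v • f v := by
  calc ∑ e ∈ G.edgeFinset, Sym2.lift ⟨fun u v => f u + f v, fun _ _ => add_comm _ _⟩ e
      = ∑ e ∈ G.edgeFinset, ∑ v with v ∈ e, f v := by
        refine sum_congr rfl fun e he => ?_
        induction e using Sym2.ind with
        | _ a b =>
          have hab : a ≠ b := G.ne_of_adj (mem_edgeFinset.1 he)
          rw [show ({v | v ∈ s(a, b)} : Finset V) = {a, b} by ext; simp, sum_pair hab]
          rfl
    _ = ∑ v, ∑ e ∈ G.incidenceFinset v, f v := by
        rw [sum_comm' (t' := univ) (s' := fun v => G.incidenceFinset v)]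
        intro e v
        simp only [mem_filter, mem_univ, true_and, incidenceFinset_eq_filter]
        tauto
    _ = ∑ v, G.degree v • f v := by simp

lemma eq_of_adj_of_degree_le_one {x y z : V} (hx : G.degree x ≤ 1) (hy : G.Adj x y)
    (hz : G.Adj x z) : y = z :=
  card_le_one.1 hx y ((mem_neighborFinset _ _ _).2 hy) z ((mem_neighborFinset _ _ _).2 hz)

lemma eq_of_adj_of_degree_le_two {x y z w : V} (hx : G.degree x ≤ 2) (hy : G.Adj x y)
    (hz : G.Adj x z) (hw : G.Adj x w) (hyw : y ≠ w) (hzw : z ≠ w) : y = z := by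
  by_contra hyz
  refine (two_lt_card_iff.2 ⟨y, z, w, ?_, ?_, ?_, hyz, hyw, hzw⟩).not_ge hx <;>
    simpa [mem_neighborFinset]

lemma Connected.three_le_degree_add_degree (hG : G.Connected) (hV : 3 ≤ Fintype.card V)
    {u v : V} (huv : G.Adj u v) : 3 ≤ G.degree u + G.degree v := by
  classical
  have hu := hG.degree_pos_of_one_lt_card (by omega) u
  have hv := hG.degree_pos_of_one_lt_card (by omega) v
  by_contra! h
  obtain ⟨w, -, hw⟩ := exists_mem_notMem_of_card_lt_card (s := {u, v}) (t := univ)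
    (card_le_two.trans_lt (by rw [card_univ]; omega))
  obtain ⟨d, -, hd, hd'⟩ := ((hG.preconnected u w).some).exists_boundary_dart
    ({u, v} : Finset V) (by simp) (by simpa using hw)
  have hdu := d.adj
  simp only [coe_insert, coe_singleton, Set.mem_insert_iff, Set.mem_singleton_iff] at hd hd'
  rcases hd with hd | hd <;> rw [hd] at hdu
  · exact hd' (.inr (eq_of_adj_of_degree_le_one (by omega) hdu huv))
  · exact hd' (.inl (eq_of_adj_of_degree_le_one (by omega) hdu huv.symm))

lemma Connected.eq_of_dist_eq_of_degree_le_two (hG : G.Connected) (hdeg : ∀ v, G.degree v ≤ 2)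
    {u : V} (hu : G.degree u ≤ 1) {x y : V} (hxy : G.dist u x = G.dist u y) : x = y := by
  suffices ∀ k x y, G.dist u x = k → G.dist u y = k → x = y from this _ x y rfl hxy.symm
  intro k
  induction k with
  | zero =>
    intro x y hx hy
    rw [hG.dist_eq_zero_iff] at hx hy
    exact hx.symm.trans hy
  | succ k ih =>
    intro x y hx hy
    obtain ⟨x', hx'x, hx'⟩ := hG.exists_adj_dist_eq u hx
    obtain ⟨y', hy'y, hy'⟩ := hG.exists_adj_dist_eq u hy
    obtain rfl := ih x' y' hx' hy'
    cases k with
    | zero =>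
      obtain rfl := hG.dist_eq_zero_iff.1 hx'
      exact eq_of_adj_of_degree_le_one hu hx'x hy'y
    | succ k =>
      -- the vertex before `x'` on a shortest path from `u` is a third neighbour of `x'`
      obtain ⟨z, hzx', hz⟩ := hG.exists_adj_dist_eq u hx'
      exact eq_of_adj_of_degree_le_two (hdeg x') hx'x hy'y hzx'.symm
        (by rintro rfl; omega) (by rintro rfl; omega)

theorem Connected.nonempty_iso_pathGraph (hG : G.Connected) {n : ℕ} (hcard : Fintype.card V = n)
    (hdeg : ∀ v, G.degree v ≤ 2) {u : V} (hu : G.degree u ≤ 1) :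
    Nonempty (G ≃g pathGraph n) := by
  have hdist (x : V) : G.dist u x < n := by
    obtain ⟨p, hp, hlen⟩ := hG.exists_path_of_dist u x
    exact hcard ▸ hlen ▸ hp.length_lt
  let f (x : V) : Fin n := ⟨G.dist u x, hdist x⟩
  have hinj {x y : V} (h : G.dist u x = G.dist u y) : x = y :=
    hG.eq_of_dist_eq_of_degree_le_two hdeg hu h
  have hbij : Function.Bijective f := (Fintype.bijective_iff_injective_and_card f).2
    ⟨fun x y h => hinj (Fin.mk.inj_iff.1 h), by simp [hcard]⟩
  refine ⟨⟨Equiv.ofBijective f hbij, ?_⟩⟩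
  intro x y
  simp only [Equiv.ofBijective_apply, pathGraph_adj, f]
  constructor
  · rintro (h | h)
    · obtain ⟨x', hx'y, hx'⟩ := hG.exists_adj_dist_eq u h.symm
      rwa [hinj hx'] at hx'y
    · obtain ⟨y', hy'x, hy'⟩ := hG.exists_adj_dist_eq u h.symm
      rw [hinj hy'] at hy'x
      exact hy'x.symm
  · intro hxy
    have hne : G.dist u x ≠ G.dist u y := fun h => hxy.ne (hinj h)
    rcases hxy.diff_dist_adj (u := u) with h | h | h <;> omega

lemma Connected.exists_degree_le_one_iff_card_edgeFinset (hG : G.Connected)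
    (hdeg : ∀ v, G.degree v ≤ 2) :
    (∃ u, G.degree u ≤ 1) ↔ #G.edgeFinset + 1 = Fintype.card V := by
  classical
  have hsum := G.sum_degrees_eq_twice_card_edges
  have hconn := hG.card_le_card_edgeFinset_add_one
  constructor
  · rintro ⟨u, hu⟩
    have := sum_le_card_nsmul (univ.erase u) (fun v => G.degree v) 2 fun v _ => hdeg v
    rw [card_erase_of_mem (mem_univ u), card_univ, smul_eq_mul] at this
    rw [← add_sum_erase _ _ (mem_univ u)] at hsum
    have := Fintype.card_pos_iff.2 ⟨u⟩
    omega
  · intro hm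
    by_contra! h
    have := card_nsmul_le_sum univ (fun v => G.degree v) 2 fun v _ => h v
    simp only [smul_eq_mul, card_univ] at this
    omega

theorem Connected.nonempty_iso_pathGraph_iff (hG : G.Connected) {n : ℕ}
    (hcard : Fintype.card V = n) :
    Nonempty (G ≃g pathGraph n) ↔ (∀ v, G.degree v ≤ 2) ∧ ∃ u, G.degree u ≤ 1 := by
  classical
  refine ⟨fun ⟨f⟩ => ⟨fun v => ?_, ?_⟩,
    fun ⟨hdeg, u, hu⟩ => hG.nonempty_iso_pathGraph hcard hdeg hu⟩
  · rw [← f.degree_eq]; exact pathGraph_degree_le_two _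
  · obtain ⟨m, rfl⟩ : ∃ m, n = m + 1 :=
      Nat.exists_eq_add_one.2 (hcard ▸ Fintype.card_pos_iff.2 hG.nonempty)
    refine ⟨f.symm 0, ?_⟩
    rw [← f.degree_eq, f.apply_symm_apply]
    exact pathGraph_degree_zero_le_one

lemma somborIndex_eq_sum :
    somborIndex G = ∑ e ∈ G.edgeFinset, Sym2.lift
      ⟨fun u v => √((G.degree u : ℝ) ^ 2 + (G.degree v : ℝ) ^ 2), fun _ _ => by
        simp only [add_comm]⟩ e := by
  unfold somborIndex
  congr!

variable (G) in
noncomputable def somborWeightSum : ℝ :=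
  ∑ e ∈ G.edgeFinset, Sym2.lift
    ⟨fun u v => somborWeight (G.degree u) + somborWeight (G.degree v), fun _ _ => add_comm _ _⟩ e

lemma somborWeightSum_eq [DecidableEq V] (hpos : ∀ v, 0 < G.degree v) :
    G.somborWeightSum = 2 * √2 * ((Fintype.card V : ℝ) - 3) + 2 * √5 +
      2 * (3 * √2 - √5) * ((#G.edgeFinset : ℝ) + 1 - Fintype.card V) := by
  have hvertex (v : V) : G.degree v • somborWeight (G.degree v) =
      (3 * √2 - √5) * G.degree v + (2 * √5 - 4 * √2) := by
    have : (G.degree v : ℝ) ≠ 0 := by exact_mod_cast (hpos v).ne'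
    rw [nsmul_eq_mul, somborWeight]
    field_simp
  have hsum : ∑ v, (G.degree v : ℝ) = 2 * #G.edgeFinset := by
    exact_mod_cast G.sum_degrees_eq_twice_card_edges
  rw [somborWeightSum, sum_edgeFinset_lift_add, sum_congr rfl fun v _ => hvertex v,
    sum_add_distrib, ← mul_sum, hsum, sum_const, card_univ, nsmul_eq_mul]
  ring

lemma Connected.somborWeight_add_le_sqrt (hG : G.Connected) (hV : 3 ≤ Fintype.card V)
    {u v : V} (huv : G.Adj u v) :
    somborWeight (G.degree u) + somborWeight (G.degree v) ≤
      √((G.degree u : ℝ) ^ 2 + (G.degree v : ℝ) ^ 2) :=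
  _root_.somborWeight_add_le_sqrt (hG.degree_pos_of_one_lt_card (by omega) u)
    (hG.degree_pos_of_one_lt_card (by omega) v) (hG.three_le_degree_add_degree hV huv)

lemma Connected.somborWeight_add_eq_sqrt_iff (hG : G.Connected) (hV : 3 ≤ Fintype.card V)
    {u v : V} (huv : G.Adj u v) :
    somborWeight (G.degree u) + somborWeight (G.degree v) =
      √((G.degree u : ℝ) ^ 2 + (G.degree v : ℝ) ^ 2) ↔ G.degree u ≤ 2 ∧ G.degree v ≤ 2 :=
  _root_.somborWeight_add_eq_sqrt_iff (hG.degree_pos_of_one_lt_card (by omega) u)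
    (hG.degree_pos_of_one_lt_card (by omega) v) (hG.three_le_degree_add_degree hV huv)

lemma Connected.somborWeightSum_le_somborIndex (hG : G.Connected) (hV : 3 ≤ Fintype.card V) :
    G.somborWeightSum ≤ somborIndex G := by
  rw [somborIndex_eq_sum, somborWeightSum]
  refine sum_le_sum fun e he => ?_
  induction e using Sym2.ind with
  | _ u v => exact hG.somborWeight_add_le_sqrt hV (mem_edgeFinset.1 he)

lemma Connected.somborWeightSum_eq_somborIndex_iff (hG : G.Connected) (hV : 3 ≤ Fintype.card V) :
    G.somborWeightSum = somborIndex G ↔ ∀ v, G.degree v ≤ 2 := by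
  rw [somborIndex_eq_sum, somborWeightSum, sum_eq_sum_iff_of_le fun e he => by
    induction e using Sym2.ind with
    | _ u v => exact hG.somborWeight_add_le_sqrt hV (mem_edgeFinset.1 he)]
  constructor
  · intro h v
    obtain ⟨w, hvw⟩ := (G.degree_pos_iff_exists_adj v).1 (hG.degree_pos_of_one_lt_card (by omega) v)
    exact ((hG.somborWeight_add_eq_sqrt_iff hV hvw).1 (h s(v, w) (mem_edgeFinset.2 hvw))).1
  · intro h e he
    induction e using Sym2.ind with
    | _ u v => exact (hG.somborWeight_add_eq_sqrt_iff hV (mem_edgeFinset.1 he)).2 ⟨h u, h v⟩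

end SimpleGraph

theorem somborIndex_ge_of_vertexConnAtMost_general {V : Type*} [Fintype V] (G : SimpleGraph V)
    (hG : G.Connected) (n : ℕ) (hcard : Fintype.card V = n)
    (hn : 3 ≤ n) :
    2 * Real.sqrt 2 * ((n : ℝ) - 3) + 2 * Real.sqrt 5 ≤ somborIndex G ∧
      (somborIndex G = 2 * Real.sqrt 2 * ((n : ℝ) - 3) + 2 * Real.sqrt 5 ↔
        Nonempty (G ≃g SimpleGraph.pathGraph n)) := by
  classical
  have hV : 3 ≤ Fintype.card V := hcard ▸ hn
  have hW := SimpleGraph.somborWeightSum_eq (hG.degree_pos_of_one_lt_card (by omega))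
  have hle := hG.somborWeightSum_le_somborIndex hV
  have hm : (n : ℝ) ≤ #G.edgeFinset + 1 := by
    exact_mod_cast hcard ▸ hG.card_le_card_edgeFinset_add_one
  have hc : 0 < 3 * √2 - √5 := by linarith [sqrt_two_bounds.1, sqrt_five_bounds.2]
  rw [hcard] at hW
  rw [hG.nonempty_iso_pathGraph_iff hcard,
    and_congr_right hG.exists_degree_le_one_iff_card_edgeFinset,
    ← hG.somborWeightSum_eq_somborIndex_iff hV, hcard]
  refine ⟨by nlinarith, fun h => ?_, fun ⟨hWeq, hmeq⟩ => ?_⟩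
  · have hgap : (#G.edgeFinset : ℝ) + 1 - n = 0 := by nlinarith
    exact ⟨by rw [hW, hgap, h]; ring, by exact_mod_cast sub_eq_zero.1 hgap⟩
  · rw [← hWeq, hW, ← hmeq]
    push_cast
    ring

/-- Lower bound for the Sombor index of connected graphs on n ≥ 3 vertices with
vertex connectivity at most k, with equality iff G ≅ Pₙ. -/
theorem somborIndex_ge_of_vertexConnAtMost {V : Type*} [Fintype V] (G : SimpleGraph V)
    (hG : G.Connected) (n k : ℕ) (hcard : Fintype.card V = n)
    (hn : 3 ≤ n) (hk : 1 ≤ k) (hconn : vertexConnAtMost G k) :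
    2 * Real.sqrt 2 * ((n : ℝ) - 3) + 2 * Real.sqrt 5 ≤ somborIndex G ∧
      (somborIndex G = 2 * Real.sqrt 2 * ((n : ℝ) - 3) + 2 * Real.sqrt 5 ↔
        Nonempty (G ≃g SimpleGraph.pathGraph n)) :=
  somborIndex_ge_of_vertexConnAtMost_general G hG n hcard hn
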